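/- Let q ≥ 3, p = 1, a = ⌈q/2⌉ and b = ⌈q²/(6q − 2)⌉. For odd q set E = 1, A = (1 − q)·τ + (a − 1)·q − 1, F = (q − a)·τ + q − a, B = (q − a)·τ + a − 1, G = −a·τ + a − 1; for even q set E = 1, A = (−a − b)·τ + (a − 1)·q + 1, F = (q − a − 1)·τ + q − b, B = a·τ − a·q + 1, G = −(a − 1)·τ + (a − 1)·q + 1. Then A·τ² + B = E·τ⁶ + F·τ³ + G, and each of A, B, E, F, G is a nonzero digit modulo τ³; in particular, the element A·τ² + B has a digit expansion of weight 2 while the right-hand side is a 3-NAF expansion of it of weight 3, so the 3-NAF is not a minimal digit expansion. -/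

import Mathlib

noncomputable section

open Complex

/-- The base τ = p/2 + i√(q − 1/4). -/
def tauC (q p : ℤ) : ℂ := (p : ℂ) / 2 + Complex.I * (Real.sqrt ((q : ℝ) - 1/4) : ℝ)

/-- The lattice ℤ[τ] = {a + bτ : a, b ∈ ℤ} as a subset of ℂ. -/
def Ztau (q p : ℤ) : Set ℂ := {z | ∃ a b : ℤ, z = (a : ℂ) + (b : ℂ) * tauC q p}

/-- τ^k divides z within ℤ[τ]. -/
def tauPowDvd (q p : ℤ) (k : ℕ) (z : ℂ) : Prop :=
  ∃ u ∈ Ztau q p, z = (tauC q p) ^ k * u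

/-- η is a nonzero digit modulo τ^w: η ∈ ℤ[τ], τ ∤ η, and η has minimal norm in
its residue class modulo τ^w. -/
def IsNonzeroDigit (q p : ℤ) (w : ℕ) (η : ℂ) : Prop :=
  η ∈ Ztau q p ∧ ¬ tauPowDvd q p 1 η ∧
    ∀ y ∈ Ztau q p, ‖η‖ ≤ ‖η - (tauC q p) ^ w * y‖

/-- The minimal norm digit set modulo τ^w. -/
def DigitSet (q p : ℤ) (w : ℕ) : Set ℂ := {0} ∪ {η | IsNonzeroDigit q p w η}

/-- σ is a digit expansion of z with digits in the minimal norm digit set modulo τ^w. -/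
def IsExpansion (q p : ℤ) (w : ℕ) (z : ℂ) (σ : ℕ → ℂ) : Prop :=
  (Function.support σ).Finite ∧ (∀ ℓ, σ ℓ ∈ DigitSet q p w) ∧
    z = ∑ᶠ ℓ, σ ℓ * (tauC q p) ^ ℓ

/-- The (Hamming) weight of an expansion: the number of nonzero digits. -/
def expWeight (σ : ℕ → ℂ) : ℕ := (Function.support σ).ncard

/-- σ is a width-w non-adjacent form: among any w consecutive digits at most one
is nonzero. -/
def IsNAF (w : ℕ) (σ : ℕ → ℂ) : Prop :=
  ∀ ℓ i j : ℕ, i < w → j < w → σ (ℓ + i) ≠ 0 → σ (ℓ + j) ≠ 0 → i = j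

/-- The Voronoi cell of 0 for ℤ[τ]. -/
def VoronoiV (q p : ℤ) : Set ℂ :=
  {z | ∀ y ∈ Ztau q p, ‖z‖ ≤ ‖z - y‖}

/-- The vertex v₀ of the Voronoi cell. -/
def v0C (q p : ℤ) : ℂ :=
  (p : ℂ) / 2 + Complex.I * ((((q : ℝ) - 1/2) / Real.sqrt (4 * (q : ℝ) - 1) : ℝ) : ℂ)

/-- The vertex v₁ of the Voronoi cell. -/
def v1C (q : ℤ) : ℂ := Complex.I * (((q : ℝ) / Real.sqrt (4 * (q : ℝ) - 1) : ℝ) : ℂ)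

/-- The direction d = p·i·τ/√q. -/
def dC (q p : ℤ) : ℂ := (p : ℂ) * Complex.I * tauC q p / ((Real.sqrt q : ℝ) : ℂ)

/-- d_w = d·(τ/√q)^w. -/
def dwC (q p : ℤ) (w : ℕ) : ℂ := dC q p * (tauC q p / ((Real.sqrt q : ℝ) : ℂ)) ^ w

/-- The height s of the rectangle R_w. -/
def sHeight (q : ℤ) : ℝ := Real.sqrt (((q : ℝ) - 1/4) / ((q : ℝ) + 2))

/-- The open rectangle R_w. -/
def Rw (q p : ℤ) (w : ℕ) : Set ℂ :=
  {z | ∃ t u : ℝ,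
    Real.sqrt q < t ∧ t < Real.sqrt ((q : ℝ) ^ (w + 1) / (4 * (q : ℝ) - 1)) - Real.sqrt q ∧
    0 < u ∧ u < sHeight q ∧
    z = (tauC q p) ^ w * v0C q p + (t : ℂ) * dwC q p w
        - (p : ℂ) * Complex.I * (u : ℂ) * dwC q p w}

/-- The lattice Λ_{τ/2} = {(aτ + bτ²)/2 : a, b ∈ ℤ}. -/
def LambdaHalf (q p : ℤ) : Set ℂ :=
  {z | ∃ a b : ℤ, z = ((a : ℂ) * tauC q p + (b : ℂ) * (tauC q p) ^ 2) / 2}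

/-- The unit e_w = τ^{w+1}/q^{(w+1)/2}. -/
def ewC (q p : ℤ) (w : ℕ) : ℂ :=
  (tauC q p) ^ (w + 1) / (((q : ℝ) ^ (((w : ℝ) + 1) / 2) : ℝ) : ℂ)

/-- The closed rectangle R̃_NH (narrow but high). -/
def RNH (q p : ℤ) (w : ℕ) : Set ℂ :=
  {z | ∃ t u : ℝ,
    0 ≤ t ∧ t ≤ sHeight q / (4 * (q : ℝ)) ∧
    |u| ≤ (q : ℝ) ^ 2 * Real.sqrt ((q : ℝ) + 2) ∧
    z = (tauC q p) ^ (w + 1) / 2 + ewC q p w * ((t : ℂ) + Complex.I * (u : ℂ))}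

/-- The closed rectangle R̃_WL (wide but low). -/
def RWL (q p : ℤ) (w : ℕ) : Set ℂ :=
  {z | ∃ t u : ℝ,
    0 ≤ t ∧ t ≤ 4 * (q : ℝ) ^ ((3 - (w : ℝ)) / 2) * ((q : ℝ) - 1/4) ∧
    |u| ≤ (q : ℝ) ^ (((w : ℝ) + 1) / 2) / (16 * (q : ℝ) * Real.sqrt ((q : ℝ) - 1/4)) ∧
    z = (tauC q p) ^ (w + 1) / 2 + ewC q p w * ((t : ℂ) + Complex.I * (u : ℂ))}

/-! With `z = x + yτ` one has `‖z‖² = x² + xy + qy²` and `‖τ‖² = q`. If `u ∈ ℤ[τ]` is not an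
integer, then `‖u‖² ≥ q`, so `‖τ³u‖² ≥ q⁴` and `τ³u` cannot bring `z` closer to `0` as soon as
`4‖z‖² ≤ q⁴`. For the integer multiples `cτ³` the inequality `‖z‖ ≤ ‖z - cτ³‖` reduces to
`|2⟪z, τ³⟫| ≤ ‖τ³‖² = q³`. For the ten digits of the counterexample both conditions, and the
identity `Aτ² + B = τ⁶ + Fτ³ + G` modulo `τ² = τ - q`, become polynomial facts in `m`, where
`q = 2m + 3` or `q = 2m + 4`. -/

theorem norm_le_norm_sub_of_two_mul_norm_le {E : Type*} [SeminormedAddCommGroup E] {z ζ : E}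
    (h : 2 * ‖z‖ ≤ ‖ζ‖) : ‖z‖ ≤ ‖z - ζ‖ := by
  linarith [norm_sub_norm_le ζ z, norm_sub_rev z ζ]

theorem norm_le_norm_sub_intCast_smul {E : Type*} [NormedAddCommGroup E] [InnerProductSpace ℝ E]
    {z ω : E} (h : |2 * inner ℝ z ω| ≤ ‖ω‖ ^ 2) (c : ℤ) : ‖z‖ ≤ ‖z - (c : ℝ) • ω‖ := by
  have hc : |(c : ℝ)| ≤ (c : ℝ) ^ 2 := by
    rw [← sq_abs]
    exact_mod_cast Int.le_self_sq |c|
  have hcross : (c : ℝ) * (2 * inner ℝ z ω) ≤ (c : ℝ) ^ 2 * ‖ω‖ ^ 2 :=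
    calc (c : ℝ) * (2 * inner ℝ z ω) ≤ |(c : ℝ)| * |2 * inner ℝ z ω| := by
          rw [← abs_mul]
          exact le_abs_self _
      _ ≤ (c : ℝ) ^ 2 * ‖ω‖ ^ 2 := by gcongr
  refine le_of_sq_le_sq ?_ (norm_nonneg _)
  rw [norm_sub_sq_real, real_inner_smul_right, norm_smul, mul_pow, Real.norm_eq_abs, sq_abs]
  linarith

theorem two_mul_ceil_half (q : ℤ) : 2 * ⌈(q : ℚ) / 2⌉ = q + q % 2 := by
  have h : ⌈(q : ℚ) / 2⌉ = -(-q / 2) := by exact_mod_cast Rat.ceil_intCast_div_natCast q 2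
  omega

theorem ceil_div_mul_mem_Ico {n m : ℤ} (hm : 0 < m) :
    n ≤ ⌈(n : ℚ) / m⌉ * m ∧ ⌈(n : ℚ) / m⌉ * m < n + m := by
  have hm' : (0 : ℚ) < m := by exact_mod_cast hm
  have h₁ := Int.le_ceil ((n : ℚ) / m)
  have h₂ := Int.ceil_lt_add_one ((n : ℚ) / m)
  rw [div_le_iff₀ hm'] at h₁
  rw [← sub_lt_iff_lt_add, lt_div_iff₀ hm'] at h₂
  constructor
  · exact_mod_cast h₁
  · have : ((⌈(n : ℚ) / m⌉ - 1) * m : ℤ) < n := by exact_mod_cast h₂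
    linarith

section Expansions

variable {q p : ℤ} {w : ℕ}

theorem IsNonzeroDigit.ne_zero {η : ℂ} (h : IsNonzeroDigit q p w η) : η ≠ 0 := by
  rintro rfl
  exact h.2.1 ⟨0, ⟨0, 0, by simp⟩, by simp⟩

theorem isExpansion_of_support_eq {σ : ℕ → ℂ} {s : Finset ℕ} (hσ : Function.support σ = s)
    (hd : ∀ ℓ ∈ s, IsNonzeroDigit q p w (σ ℓ)) :
    IsExpansion q p w (∑ ℓ ∈ s, σ ℓ * tauC q p ^ ℓ) σ := by
  refine ⟨hσ ▸ s.finite_toSet, fun ℓ => ?_, ?_⟩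
  · by_cases hℓ : ℓ ∈ s
    · exact Or.inr (hd ℓ hℓ)
    · exact Or.inl (Function.notMem_support.1 (hσ ▸ hℓ))
  · exact (finsum_eq_sum_of_support_subset _ (hσ ▸ Function.support_mul_subset_left _ _)).symm

theorem expWeight_of_support_eq {σ : ℕ → ℂ} {s : Finset ℕ} (hσ : Function.support σ = s) :
    expWeight σ = s.card := by
  rw [expWeight, hσ, Set.ncard_coe_finset]

theorem exists_isExpansion_expWeight_two {A B : ℂ} (hA : IsNonzeroDigit q p w A)
    (hB : IsNonzeroDigit q p w B) :
    ∃ σ, IsExpansion q p w (A * tauC q p ^ 2 + B) σ ∧ expWeight σ = 2 := by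
  set σ : ℕ → ℂ := fun ℓ => if ℓ = 0 then B else if ℓ = 2 then A else 0
  have hσ : Function.support σ = ↑({0, 2} : Finset ℕ) := by
    ext ℓ
    simp only [σ, Function.mem_support, Finset.coe_insert, Finset.coe_singleton,
      Set.mem_insert_iff, Set.mem_singleton_iff]
    split_ifs <;> simp_all [hA.ne_zero, hB.ne_zero]
  refine ⟨σ, ?_, expWeight_of_support_eq hσ⟩
  convert isExpansion_of_support_eq hσ ?_ using 1
  · simp [σ]
    ring
  · simp [σ, hA, hB]

theorem exists_isExpansion_isNAF_three_expWeight_three {E F G : ℂ} (hE : IsNonzeroDigit q p w E)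
    (hF : IsNonzeroDigit q p w F) (hG : IsNonzeroDigit q p w G) :
    ∃ σ, IsExpansion q p w (E * tauC q p ^ 6 + F * tauC q p ^ 3 + G) σ ∧ IsNAF 3 σ ∧
      expWeight σ = 3 := by
  set σ : ℕ → ℂ := fun ℓ => if ℓ = 0 then G else if ℓ = 3 then F else if ℓ = 6 then E else 0
  have hσ : Function.support σ = ↑({0, 3, 6} : Finset ℕ) := by
    ext ℓ
    simp only [σ, Function.mem_support, Finset.coe_insert, Finset.coe_singleton,
      Set.mem_insert_iff, Set.mem_singleton_iff]
    split_ifs <;> simp_all [hE.ne_zero, hF.ne_zero, hG.ne_zero]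
  refine ⟨σ, ?_, fun ℓ i j hi hj hσi hσj => ?_, expWeight_of_support_eq hσ⟩
  · convert isExpansion_of_support_eq hσ ?_ using 1
    · simp [σ]
      ring
    · simp [σ, hE, hF, hG]
  · have hi' : ℓ + i ∈ ({0, 3, 6} : Finset ℕ) := hσ.subset hσi
    have hj' : ℓ + j ∈ ({0, 3, 6} : Finset ℕ) := hσ.subset hσj
    simp only [Finset.mem_insert, Finset.mem_singleton] at hi' hj'
    omega

end Expansions

section Lattice

variable {q : ℤ}

theorem intCast_sub_quarter_pos (hq : 0 < q) : (0 : ℝ) < q - 1/4 := by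
  have : (1 : ℝ) ≤ q := by exact_mod_cast hq
  linarith

theorem tauC_sq (hq : 0 < q) : tauC q 1 ^ 2 = tauC q 1 - q := by
  have hs : ((Real.sqrt ((q : ℝ) - 1/4) : ℝ) : ℂ) ^ 2 = (q : ℂ) - 1/4 := by
    rw [← Complex.ofReal_pow, Real.sq_sqrt (intCast_sub_quarter_pos hq).le]
    push_cast
    ring
  simp only [tauC]
  push_cast
  linear_combination ((Real.sqrt ((q : ℝ) - 1/4) : ℝ) : ℂ) ^ 2 * Complex.I_sq - hs

theorem tauC_pow_three (hq : 0 < q) :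
    tauC q 1 ^ 3 = ((-q : ℤ) : ℂ) + ((1 - q : ℤ) : ℂ) * tauC q 1 := by
  push_cast
  linear_combination (tauC q 1 + 1) * tauC_sq hq

theorem re_intCast_add_mul_tauC (x y : ℤ) : ((x : ℂ) + y * tauC q 1).re = x + y / 2 := by
  simp [tauC]
  ring

theorem im_intCast_add_mul_tauC (x y : ℤ) :
    ((x : ℂ) + y * tauC q 1).im = y * Real.sqrt ((q : ℝ) - 1/4) := by
  simp [tauC]

theorem norm_intCast_add_mul_tauC_sq (hq : 0 < q) (x y : ℤ) :
    ‖(x : ℂ) + y * tauC q 1‖ ^ 2 = ((x ^ 2 + x * y + q * y ^ 2 : ℤ) : ℝ) := by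
  have hs : Real.sqrt ((q : ℝ) - 1/4) ^ 2 = q - 1/4 :=
    Real.sq_sqrt (intCast_sub_quarter_pos hq).le
  rw [Complex.sq_norm, Complex.normSq_apply, re_intCast_add_mul_tauC, im_intCast_add_mul_tauC]
  push_cast
  linear_combination (y : ℝ) ^ 2 * hs

theorem norm_tauC_sq (hq : 0 < q) : ‖tauC q 1‖ ^ 2 = q := by
  simpa using norm_intCast_add_mul_tauC_sq hq 0 1

theorem le_norm_intCast_add_mul_tauC_sq (hq : 0 < q) (c : ℤ) {d : ℤ} (hd : d ≠ 0) :
    (q : ℝ) ≤ ‖(c : ℂ) + d * tauC q 1‖ ^ 2 := by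
  rw [norm_intCast_add_mul_tauC_sq hq]
  have : 1 ≤ d ^ 2 := by nlinarith [Int.one_le_abs hd, sq_abs d]
  exact_mod_cast (by nlinarith [sq_nonneg (2 * c + d)] : q ≤ c ^ 2 + c * d + q * d ^ 2)

theorem intCast_add_mul_tauC_injective (hq : 0 < q) {x y u v : ℤ}
    (h : (x : ℂ) + y * tauC q 1 = u + v * tauC q 1) : x = u ∧ y = v := by
  have hs : 0 < Real.sqrt ((q : ℝ) - 1/4) := Real.sqrt_pos.2 (intCast_sub_quarter_pos hq)
  have him := congrArg Complex.im h
  have hre := congrArg Complex.re h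
  rw [im_intCast_add_mul_tauC, im_intCast_add_mul_tauC] at him
  rw [re_intCast_add_mul_tauC, re_intCast_add_mul_tauC] at hre
  have hy : (y : ℝ) = v := mul_right_cancel₀ hs.ne' him
  exact ⟨by exact_mod_cast (by linarith : (x : ℝ) = u), by exact_mod_cast hy⟩

theorem dvd_of_tauPowDvd_one (hq : 0 < q) {x y : ℤ} (h : tauPowDvd q 1 1 (x + y * tauC q 1)) :
    q ∣ x := by
  obtain ⟨_, ⟨c, d, rfl⟩, h⟩ := h
  have h' : (x : ℂ) + y * tauC q 1 = ((-(q * d) : ℤ) : ℂ) + ((c + d : ℤ) : ℂ) * tauC q 1 := by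
    push_cast
    linear_combination h + (d : ℂ) * tauC_sq hq
  exact ⟨-d, by rw [(intCast_add_mul_tauC_injective hq h').1]; ring⟩

theorem isNonzeroDigit_three_of_bounds (hq : 0 < q) {x y : ℤ} (hx : ¬ q ∣ x)
    (hnorm : 4 * (x ^ 2 + x * y + q * y ^ 2) ≤ q ^ 4)
    (hinner : |x * (1 - 3 * q) + y * (q - 2 * q ^ 2)| ≤ q ^ 3) :
    IsNonzeroDigit q 1 3 (y * tauC q 1 + x) := by
  set z : ℂ := x + y * tauC q 1 with hz
  rw [add_comm]
  refine ⟨⟨x, y, rfl⟩, fun h => hx (dvd_of_tauPowDvd_one hq h), ?_⟩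
  rintro _ ⟨c, d, rfl⟩
  have hτ3 : ‖tauC q 1 ^ 3‖ ^ 2 = (q : ℝ) ^ 3 := by
    rw [norm_pow, ← pow_mul, mul_comm, pow_mul, norm_tauC_sq hq]
  rcases eq_or_ne d 0 with rfl | hd
  · have hsmul : tauC q 1 ^ 3 * (c + ((0 : ℤ) : ℂ) * tauC q 1) = (c : ℝ) • tauC q 1 ^ 3 := by
      simp [Complex.real_smul, mul_comm]
    rw [hsmul]
    refine norm_le_norm_sub_intCast_smul ?_ c
    have hpolar :
        2 * inner ℝ z (tauC q 1 ^ 3) = ((x * (1 - 3 * q) + y * (q - 2 * q ^ 2) : ℤ) : ℝ) := by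
      have hsub : z - tauC q 1 ^ 3 = ((x + q : ℤ) : ℂ) + ((y - 1 + q : ℤ) : ℂ) * tauC q 1 := by
        rw [hz, tauC_pow_three hq]
        push_cast
        ring
      have := norm_sub_sq_real z (tauC q 1 ^ 3)
      rw [hsub, norm_intCast_add_mul_tauC_sq hq, hz, norm_intCast_add_mul_tauC_sq hq, hτ3] at this
      push_cast at this ⊢
      linarith
    rw [hpolar, hτ3]
    exact_mod_cast hinner
  · refine norm_le_norm_sub_of_two_mul_norm_le (le_of_sq_le_sq ?_ (norm_nonneg _))
    have hu := le_norm_intCast_add_mul_tauC_sq hq c hd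
    calc (2 * ‖z‖) ^ 2 = ((4 * (x ^ 2 + x * y + q * y ^ 2) : ℤ) : ℝ) := by
          rw [mul_pow, hz, norm_intCast_add_mul_tauC_sq hq]
          push_cast
          ring
      _ ≤ (q : ℝ) ^ 3 * q := by
          rw [← pow_succ]
          exact_mod_cast hnorm
      _ ≤ (q : ℝ) ^ 3 * ‖(c : ℂ) + d * tauC q 1‖ ^ 2 := by gcongr
      _ = ‖tauC q 1 ^ 3 * (c + d * tauC q 1)‖ ^ 2 := by rw [norm_mul, mul_pow, hτ3]

theorem isNonzeroDigit_three_one (hq : 2 ≤ q) : IsNonzeroDigit q 1 3 1 := by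
  have hq0 : 0 < q := by omega
  have hq2 : 4 ≤ q ^ 2 := by nlinarith
  simpa using isNonzeroDigit_three_of_bounds (x := 1) (y := 0) hq0
    ((Int.exists_lt_and_lt_iff_not_dvd _ hq0).1 ⟨0, by omega, by omega⟩) (by nlinarith)
    (abs_le.2 ⟨by nlinarith, by nlinarith⟩)

end Lattice

def IsNAFNonminimalityWitness (q p : ℤ) (A B E F G : ℂ) : Prop :=
  A * tauC q p ^ 2 + B = E * tauC q p ^ 6 + F * tauC q p ^ 3 + G ∧
    IsNonzeroDigit q p 3 A ∧ IsNonzeroDigit q p 3 B ∧ IsNonzeroDigit q p 3 E ∧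
    IsNonzeroDigit q p 3 F ∧ IsNonzeroDigit q p 3 G ∧
    (∃ σ' : ℕ → ℂ, IsExpansion q p 3 (A * tauC q p ^ 2 + B) σ' ∧ expWeight σ' = 2) ∧
    (∃ σ : ℕ → ℂ, IsExpansion q p 3 (A * tauC q p ^ 2 + B) σ ∧ IsNAF 3 σ ∧ expWeight σ = 3)

theorem isNAFNonminimalityWitness_of_digits {q p : ℤ} {A B E F G : ℂ}
    (hid : A * tauC q p ^ 2 + B = E * tauC q p ^ 6 + F * tauC q p ^ 3 + G)
    (hA : IsNonzeroDigit q p 3 A) (hB : IsNonzeroDigit q p 3 B) (hE : IsNonzeroDigit q p 3 E)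
    (hF : IsNonzeroDigit q p 3 F) (hG : IsNonzeroDigit q p 3 G) :
    IsNAFNonminimalityWitness q p A B E F G :=
  ⟨hid, hA, hB, hE, hF, hG, exists_isExpansion_expWeight_two hA hB,
    hid ▸ exists_isExpansion_isNAF_three_expWeight_three hE hF hG⟩

theorem isNAFNonminimalityWitness_of_odd {q a : ℤ} (hq : 3 ≤ q) (ha : 2 * a = q + 1) :
    IsNAFNonminimalityWitness q 1
      (((1 - q : ℤ) : ℂ) * tauC q 1 + ((a - 1) * q - 1 : ℤ))
      (((q - a : ℤ) : ℂ) * tauC q 1 + ((a - 1 : ℤ) : ℂ)) 1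
      (((q - a : ℤ) : ℂ) * tauC q 1 + ((q - a : ℤ) : ℂ))
      (((-a : ℤ) : ℂ) * tauC q 1 + ((a - 1 : ℤ) : ℂ)) := by
  obtain ⟨m, rfl⟩ : ∃ m, q = 2 * m + 3 := ⟨a - 2, by omega⟩
  obtain rfl : a = m + 2 := by omega
  have hq0 : 0 < 2 * m + 3 := by omega
  have hm : 0 ≤ m := by omega
  have hm2 := pow_nonneg hm 2
  have hm3 := pow_nonneg hm 3
  have hm4 := pow_nonneg hm 4
  have hτ := tauC_sq hq0
  push_cast at hτ
  refine isNAFNonminimalityWitness_of_digits ?_ ?_ ?_ (isNonzeroDigit_three_one (by omega)) ?_ ?_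
  · push_cast
    linear_combination (-tauC (2 * m + 3) 1 ^ 4 - tauC (2 * m + 3) 1 ^ 3
      + (m + 1 : ℂ) * tauC (2 * m + 3) 1 ^ 2 + tauC (2 * m + 3) 1) * hτ
  · exact isNonzeroDigit_three_of_bounds hq0 ((Int.exists_lt_and_lt_iff_not_dvd _ hq0).1
      ⟨m, by nlinarith, by nlinarith⟩) (by nlinarith) (abs_le.2 ⟨by nlinarith, by nlinarith⟩)
  all_goals exact isNonzeroDigit_three_of_bounds hq0 ((Int.exists_lt_and_lt_iff_not_dvd _ hq0).1
    ⟨0, by nlinarith, by nlinarith⟩) (by nlinarith) (abs_le.2 ⟨by nlinarith, by nlinarith⟩)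

theorem isNAFNonminimalityWitness_of_even {q a b : ℤ} (hq : 3 ≤ q) (ha : 2 * a = q)
    (hb : q ^ 2 ≤ b * (6 * q - 2)) (hb' : b * (6 * q - 2) < q ^ 2 + (6 * q - 2)) :
    IsNAFNonminimalityWitness q 1
      (((-a - b : ℤ) : ℂ) * tauC q 1 + ((a - 1) * q + 1 : ℤ))
      (((a : ℤ) : ℂ) * tauC q 1 + ((-(a * q) + 1 : ℤ) : ℂ)) 1
      (((q - a - 1 : ℤ) : ℂ) * tauC q 1 + ((q - b : ℤ) : ℂ))
      (((-(a - 1) : ℤ) : ℂ) * tauC q 1 + ((a - 1) * q + 1 : ℤ)) := by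
  obtain ⟨m, rfl⟩ : ∃ m, q = 2 * m + 4 := ⟨a - 2, by omega⟩
  obtain rfl : a = m + 2 := by omega
  have hq0 : 0 < 2 * m + 4 := by omega
  have hm : 0 ≤ m := by omega
  have hu : 0 ≤ 6 * b - 2 * m - 5 := by nlinarith
  have hv : 0 ≤ 2 * m + 10 - 6 * b := by nlinarith
  have hm2 := pow_nonneg hm 2
  have hm3 := pow_nonneg hm 3
  have hm4 := pow_nonneg hm 4
  have hmu := mul_nonneg hm hu
  have hmv := mul_nonneg hm hv
  have hm2u := mul_nonneg hm2 hu
  have hm2v := mul_nonneg hm2 hv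
  have huv := mul_nonneg hu hv
  have hmuv := mul_nonneg hm huv
  have hτ := tauC_sq hq0
  push_cast at hτ
  refine isNAFNonminimalityWitness_of_digits ?_ ?_ ?_ (isNonzeroDigit_three_one (by omega)) ?_ ?_
  · push_cast
    linear_combination (-tauC (2 * m + 4) 1 ^ 4 - tauC (2 * m + 4) 1 ^ 3
      + (m + 2 : ℂ) * tauC (2 * m + 4) 1 ^ 2 - 2 * (m + 2 : ℂ) + 1) * hτ
  · exact isNonzeroDigit_three_of_bounds hq0 ((Int.exists_lt_and_lt_iff_not_dvd _ hq0).1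
      ⟨m + 1, by nlinarith, by nlinarith⟩) (by nlinarith) (abs_le.2 ⟨by nlinarith, by nlinarith⟩)
  · exact isNonzeroDigit_three_of_bounds hq0 ((Int.exists_lt_and_lt_iff_not_dvd _ hq0).1
      ⟨-(m + 2), by nlinarith, by nlinarith⟩) (by nlinarith) (abs_le.2 ⟨by nlinarith, by nlinarith⟩)
  · exact isNonzeroDigit_three_of_bounds hq0 ((Int.exists_lt_and_lt_iff_not_dvd _ hq0).1
      ⟨0, by nlinarith, by nlinarith⟩) (by nlinarith) (abs_le.2 ⟨by nlinarith, by nlinarith⟩)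
  · exact isNonzeroDigit_three_of_bounds hq0 ((Int.exists_lt_and_lt_iff_not_dvd _ hq0).1
      ⟨m + 1, by nlinarith, by nlinarith⟩) (by nlinarith) (abs_le.2 ⟨by nlinarith, by nlinarith⟩)

/-- explicit counterexample to minimality of the 3-NAF for q ≥ 3,
p = 1 (odd and even q). -/
theorem stmt15 (q p : ℤ) (hq : 3 ≤ q) (hp : p = 1) :
    let a : ℤ := ⌈(q : ℚ) / 2⌉
    let b : ℤ := ⌈(q : ℚ) ^ 2 / (6 * (q : ℚ) - 2)⌉
    let τ : ℂ := tauC q p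
    (Odd q →
      let E : ℂ := 1
      let A : ℂ := ((1 - q : ℤ) : ℂ) * τ + ((a - 1) * q - 1 : ℤ)
      let F : ℂ := ((q - a : ℤ) : ℂ) * τ + ((q - a : ℤ) : ℂ)
      let B : ℂ := ((q - a : ℤ) : ℂ) * τ + ((a - 1 : ℤ) : ℂ)
      let G : ℂ := ((-a : ℤ) : ℂ) * τ + ((a - 1 : ℤ) : ℂ)
      A * τ ^ 2 + B = E * τ ^ 6 + F * τ ^ 3 + G ∧
      IsNonzeroDigit q p 3 A ∧ IsNonzeroDigit q p 3 B ∧ IsNonzeroDigit q p 3 E ∧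
      IsNonzeroDigit q p 3 F ∧ IsNonzeroDigit q p 3 G ∧
      (∃ σ' : ℕ → ℂ, IsExpansion q p 3 (A * τ ^ 2 + B) σ' ∧ expWeight σ' = 2) ∧
      (∃ σ : ℕ → ℂ, IsExpansion q p 3 (A * τ ^ 2 + B) σ ∧ IsNAF 3 σ ∧
        expWeight σ = 3)) ∧
    (Even q →
      let E : ℂ := 1
      let A : ℂ := ((-a - b : ℤ) : ℂ) * τ + ((a - 1) * q + 1 : ℤ)
      let F : ℂ := ((q - a - 1 : ℤ) : ℂ) * τ + ((q - b : ℤ) : ℂ)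
      let B : ℂ := ((a : ℤ) : ℂ) * τ + ((-(a * q) + 1 : ℤ) : ℂ)
      let G : ℂ := ((-(a - 1) : ℤ) : ℂ) * τ + ((a - 1) * q + 1 : ℤ)
      A * τ ^ 2 + B = E * τ ^ 6 + F * τ ^ 3 + G ∧
      IsNonzeroDigit q p 3 A ∧ IsNonzeroDigit q p 3 B ∧ IsNonzeroDigit q p 3 E ∧
      IsNonzeroDigit q p 3 F ∧ IsNonzeroDigit q p 3 G ∧
      (∃ σ' : ℕ → ℂ, IsExpansion q p 3 (A * τ ^ 2 + B) σ' ∧ expWeight σ' = 2) ∧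
      (∃ σ : ℕ → ℂ, IsExpansion q p 3 (A * τ ^ 2 + B) σ ∧ IsNAF 3 σ ∧
        expWeight σ = 3)) := by
  subst hp
  intro a b τ
  have ha := two_mul_ceil_half q
  have hb := ceil_div_mul_mem_Ico (n := q ^ 2) (m := 6 * q - 2) (by omega)
  push_cast at hb
  refine ⟨fun hodd => ?_, fun heven => ?_⟩
  · rw [Int.odd_iff.1 hodd] at ha
    exact isNAFNonminimalityWitness_of_odd hq ha
  · rw [Int.even_iff.1 heven, add_zero] at ha
    exact isNAFNonminimalityWitness_of_even hq ha hb.1 hb.2
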